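/- arXiv:2604.18997 — 3 statements merged into one kernel-verified Lean document; each statement's English description precedes it below -/
import Mathlib

section
/- Let (Ξ, 𝔐) be a measurable space, μ a probability measure on Ξ, p : Ξ → ℝ, α ∈ ℝ, β ∈ ℝ, and g : X → Ξ → (Fin m → ℝ). Define X_P(α) = {x | ∀ ξ, α ≤ p ξ → ∀ j, g x ξ j ≤ 0} and X_C = {x | μ {ξ | ∀ j, g x ξ j ≤ 0} ≥ ENNReal.ofReal (1 − β)}. If μ {ξ | α ≤ p ξ} ≥ ENNReal.ofReal (1 − β), then X_P(α) ⊆ X_C. -/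
open MeasureTheory

/-- If the event {ξ | p ξ ≥ α} has measure at least 1 - β, then the PECO
feasible set X_P(α) is contained in the CCO feasible set X_C. -/
theorem peco_subset_cco {Ξ X : Type*} {m : ℕ} [MeasurableSpace Ξ]
    (μ : Measure Ξ) [IsProbabilityMeasure μ]
    (p : Ξ → ℝ) (α β : ℝ) (g : X → Ξ → Fin m → ℝ)
    (h : μ {ξ | α ≤ p ξ} ≥ ENNReal.ofReal (1 - β)) :
    {x : X | ∀ ξ : Ξ, α ≤ p ξ → ∀ j : Fin m, g x ξ j ≤ 0} ⊆
      {x : X | μ {ξ | ∀ j : Fin m, g x ξ j ≤ 0} ≥ ENNReal.ofReal (1 - β)} := by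
  intro x hx
  exact le_trans h (measure_mono fun ξ hξ => hx ξ hξ)
end

section
/- Let (Ξ, 𝔐) be a measurable space in which singletons are measurable, μ a probability measure on Ξ, p : Ξ → ℝ measurable, α β ∈ ℝ, and g : X → Ξ → (Fin m → ℝ). Define M(x) = {ξ | ∀ j, g x ξ j ≤ 0}, X_P(α) = {x | ∀ ξ, α ≤ p ξ → ξ ∈ M(x)}, and X_C = {x | μ (M(x)) ≥ ENNReal.ofReal (1 − β)}. Assume: (i) μ {ξ | α ≤ p ξ} = ENNReal.ofReal (1 − β); (ii) for every x ∈ X_C and all ξᵃ ∈ M(x), ξᵇ ∉ M(x), one has p ξᵇ ≤ p ξᵃ; (iii) every ξ with α ≤ p ξ is an atom, i.e. μ {ξ} > 0. Then X_P(α) = X_C. -/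
open MeasureTheory Set

/-!
If `x` satisfies the chance constraint, then every realization `ξ` with `α ≤ p ξ` that violated
it would, by the ordering condition, lie together with the whole satisfied set `M(x)` inside
`{α ≤ p}`. Since `ξ` is an atom, `M(x) ∪ {ξ}` would then have measure strictly larger than
`μ {α ≤ p} = 1 - β ≤ μ (M(x))`, which is absurd. The converse is monotonicity of `μ`.
-/

theorem measure_lt_measure_insert {Ξ : Type*} [MeasurableSpace Ξ]
    [MeasurableSingletonClass Ξ]
    {μ : Measure Ξ} {s : Set Ξ} {a : Ξ} (ha : a ∉ s) (hμa : μ {a} ≠ 0) (hs : μ s ≠ ⊤) :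
    μ s < μ (insert a s) :=
  calc μ s < μ s + μ {a} := ENNReal.lt_add_right hs hμa
    _ = μ (insert a s) := by
      rw [← measure_union (disjoint_singleton_right.2 ha) (measurableSet_singleton a),
        union_singleton]

theorem insert_subset_superlevel_of_ordered {Ξ : Type*} {p : Ξ → ℝ} {α : ℝ} {M : Set Ξ}
    (hord : ∀ a ∈ M, ∀ b ∉ M, p b ≤ p a) {ξ : Ξ} (hξ : α ≤ p ξ) (hξM : ξ ∉ M) :
    insert ξ M ⊆ {ζ | α ≤ p ζ} := by
  rintro ζ (rfl | hζ)
  · exact hξ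
  · exact hξ.trans (hord ζ hζ ξ hξM)

theorem superlevel_subset_of_measure_le {Ξ : Type*} [MeasurableSpace Ξ]
    [MeasurableSingletonClass Ξ] {μ : Measure Ξ} {p : Ξ → ℝ} {α : ℝ} {M : Set Ξ}
    (hord : ∀ a ∈ M, ∀ b ∉ M, p b ≤ p a) (hatom : ∀ ξ, α ≤ p ξ → μ {ξ} ≠ 0)
    (hfin : μ {ξ | α ≤ p ξ} ≠ ⊤) (hle : μ {ξ | α ≤ p ξ} ≤ μ M) :
    {ξ | α ≤ p ξ} ⊆ M := by
  intro ξ hξ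
  by_contra hξM
  have hsub := insert_subset_superlevel_of_ordered hord hξ hξM
  have hM_fin : μ M ≠ ⊤ :=
    ne_top_of_le_ne_top hfin (measure_mono ((subset_insert ξ M).trans hsub))
  have hlt := measure_lt_measure_insert hξM (hatom ξ hξ) hM_fin
  exact (hlt.trans_le (measure_mono hsub)).not_ge hle

theorem peco_eq_cco_general {Ξ X : Type*} {m : ℕ} [MeasurableSpace Ξ]
    [MeasurableSingletonClass Ξ]
    (μ : Measure Ξ)
    (p : Ξ → ℝ) (α β : ℝ)
    (g : X → Ξ → Fin m → ℝ)
    (h1 : μ {ξ | α ≤ p ξ} = ENNReal.ofReal (1 - β))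
    (h2 : ∀ x : X, μ {ξ | ∀ j : Fin m, g x ξ j ≤ 0} ≥ ENNReal.ofReal (1 - β) →
      ∀ ξa ∈ {ξ | ∀ j : Fin m, g x ξ j ≤ 0},
        ∀ ξb ∉ {ξ | ∀ j : Fin m, g x ξ j ≤ 0}, p ξb ≤ p ξa)
    (h3 : ∀ ξ : Ξ, α ≤ p ξ → 0 < μ {ξ}) :
    {x : X | ∀ ξ : Ξ, α ≤ p ξ → ξ ∈ {ξ | ∀ j : Fin m, g x ξ j ≤ 0}} =
      {x : X | μ {ξ | ∀ j : Fin m, g x ξ j ≤ 0} ≥ ENNReal.ofReal (1 - β)} := by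
  ext x
  constructor
  · intro hx
    exact h1 ▸ measure_mono hx
  · intro hx
    exact superlevel_subset_of_measure_le (h2 x hx) (fun ξ hξ => (h3 ξ hξ).ne')
      (h1 ▸ ENNReal.ofReal_ne_top) (h1 ▸ hx)

/-- Under the condition μ{ξ | α ≤ p ξ} = 1 - β, the ordering condition that
every satisfied realization is at least as probable as every violated one,
and the atomicity of probable realizations, the PECO and CCO feasible sets
coincide: X_P(α) = X_C. -/
theorem peco_eq_cco {Ξ X : Type*} {m : ℕ} [MeasurableSpace Ξ]
    [MeasurableSingletonClass Ξ]
    (μ : Measure Ξ) [IsProbabilityMeasure μ]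
    (p : Ξ → ℝ) (hp : Measurable p) (α β : ℝ)
    (g : X → Ξ → Fin m → ℝ)
    (h1 : μ {ξ | α ≤ p ξ} = ENNReal.ofReal (1 - β))
    (h2 : ∀ x : X, μ {ξ | ∀ j : Fin m, g x ξ j ≤ 0} ≥ ENNReal.ofReal (1 - β) →
      ∀ ξa ∈ {ξ | ∀ j : Fin m, g x ξ j ≤ 0},
        ∀ ξb ∉ {ξ | ∀ j : Fin m, g x ξ j ≤ 0}, p ξb ≤ p ξa)
    (h3 : ∀ ξ : Ξ, α ≤ p ξ → 0 < μ {ξ}) :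
    {x : X | ∀ ξ : Ξ, α ≤ p ξ → ξ ∈ {ξ | ∀ j : Fin m, g x ξ j ≤ 0}} =
      {x : X | μ {ξ | ∀ j : Fin m, g x ξ j ≤ 0} ≥ ENNReal.ofReal (1 - β)} :=
  peco_eq_cco_general μ p α β g h1 h2 h3
end

section
/- Let Ξ be a type with decidable equality, U : Finset Ξ with U.card = N and N ≥ 1, K ≥ 1, and R : Fin K → Finset Ξ with R i ⊆ U for every i. Let z ∈ ℕ satisfy ((Finset.univ : Finset (Fin K)).biUnion R).card ≤ z and z ≤ N. Then, as an identity in ℚ, the probability ϱ(z) that a uniformly random z-element subset of U contains R i for at least one i satisfies: (((U.powersetCard z).filter (fun s => ∃ i, R i ⊆ s)).card : ℚ) / (N.choose z) = (1 / (N.choose z)) * ∑ over nonempty J in (Finset.univ : Finset (Fin K)).powerset of (−1)^(J.card + 1) * ((N − (J.biUnion R).card).choose (z − (J.biUnion R).card) : ℚ). -/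
/-!
The `z`-subsets `s` of `U` with `R i ⊆ s` for all `i ∈ J` are those containing `⋃_{i ∈ J} R i`,
and there are `C(N - r_J, z - r_J)` of them. Inclusion–exclusion over the events `R i ⊆ s`
turns these counts into the count of subsets containing some `R i`.
-/

open Finset

namespace Finset

variable {α ι : Type*} [DecidableEq α]

theorem inf'_filter (s : Finset α) (J : Finset ι) (hJ : J.Nonempty) (p : ι → α → Prop)
    [∀ i, DecidablePred (p i)] :
    J.inf' hJ (fun i => s.filter (p i)) = s.filter (fun a => ∀ i ∈ J, p i a) := by
  ext a
  simp only [mem_inf', mem_filter]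
  obtain ⟨j, hj⟩ := hJ
  exact ⟨fun h => ⟨(h j hj).1, fun i hi => (h i hi).2⟩, fun h i hi => ⟨h.1, h.2 i hi⟩⟩

theorem card_biUnion_eq_sum_of_card_inf' (s : Finset ι) (S : ι → Finset α)
    (g : Finset ι → ℤ) (hg : ∀ J ⊆ s, ∀ hJ : J.Nonempty, #(J.inf' hJ S) = g J) :
    #(s.biUnion S) = ∑ J ∈ s.powerset with J.Nonempty, (-1 : ℤ) ^ (#J + 1) * g J := by
  rw [inclusion_exclusion_card_biUnion, ← sum_attach (s.powerset.filter (·.Nonempty))]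
  refine sum_congr rfl fun J _ => ?_
  obtain ⟨hJs, hJ⟩ := mem_filter.1 J.2
  rw [hg J.1 (mem_powerset.1 hJs) hJ]

end Finset

theorem card_powersetCard_filter_exists_subset {Ξ ι : Type*} [DecidableEq Ξ]
    (U : Finset Ξ) (I : Finset ι) (R : ι → Finset Ξ) (hR : ∀ i ∈ I, R i ⊆ U)
    (z : ℕ) (hz : #(I.biUnion R) ≤ z) :
    #((U.powersetCard z).filter (fun s => ∃ i ∈ I, R i ⊆ s)) =
      ∑ J ∈ I.powerset with J.Nonempty,
        (-1 : ℤ) ^ (#J + 1) * ((#U - #(J.biUnion R)).choose (z - #(J.biUnion R)) : ℤ) := by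
  have hunion : (U.powersetCard z).filter (fun s => ∃ i ∈ I, R i ⊆ s) =
      I.biUnion fun i => (U.powersetCard z).filter (R i ⊆ ·) := by
    ext s
    simp only [mem_filter, mem_biUnion]
    tauto
  rw [hunion]
  refine card_biUnion_eq_sum_of_card_inf' _ _ _ fun J hJI hJ => ?_
  have hJR : J.biUnion R ⊆ I.biUnion R := biUnion_subset_biUnion_of_subset_left R hJI
  have hfilter : (U.powersetCard z).filter (fun s => ∀ i ∈ J, R i ⊆ s) =
      (U.powersetCard z).filter (J.biUnion R ⊆ ·) := by
    simp only [biUnion_subset]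
  rw [inf'_filter, hfilter, card_filter_powersetCard_subset _ _ _
    (hJR.trans (biUnion_subset.2 hR)) ((card_le_card hJR).trans hz)]

theorem prob_random_subset_contains_sdds_general {Ξ : Type*} [DecidableEq Ξ]
    (U : Finset Ξ) (N : ℕ) (hU : U.card = N)
    (K : ℕ) (R : Fin K → Finset Ξ) (hR : ∀ i, R i ⊆ U)
    (z : ℕ) (hz1 : ((Finset.univ : Finset (Fin K)).biUnion R).card ≤ z) :
    (((U.powersetCard z).filter (fun s => ∃ i, R i ⊆ s)).card : ℚ) /
        (N.choose z : ℚ) =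
      (1 / (N.choose z : ℚ)) *
        ∑ J ∈ ((Finset.univ : Finset (Fin K)).powerset).filter
            (fun J => J.Nonempty),
          (-1 : ℚ) ^ (J.card + 1) *
            ((N - (J.biUnion R).card).choose (z - (J.biUnion R).card) : ℚ) := by
  have hcount := card_powersetCard_filter_exists_subset U univ R (fun i _ => hR i) z hz1
  simp only [mem_univ, true_and, hU] at hcount
  rw [one_div_mul_eq_div]
  congr 1
  exact_mod_cast hcount

/-- Probability form of the main theorem: the probability ϱ(z) that a
uniformly random z-element subset of U contains at least one of the sets R i
is given by the inclusion–exclusion formula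
ϱ(z) = (1/C(N,z)) Σ_{∅ ≠ J} (-1)^(|J|+1) C(N - r_J, z - r_J). -/
theorem prob_random_subset_contains_sdds {Ξ : Type*} [DecidableEq Ξ]
    (U : Finset Ξ) (N : ℕ) (hU : U.card = N) (hN : 1 ≤ N)
    (K : ℕ) (hK : 1 ≤ K) (R : Fin K → Finset Ξ) (hR : ∀ i, R i ⊆ U)
    (z : ℕ) (hz1 : ((Finset.univ : Finset (Fin K)).biUnion R).card ≤ z)
    (hz2 : z ≤ N) :
    (((U.powersetCard z).filter (fun s => ∃ i, R i ⊆ s)).card : ℚ) /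
        (N.choose z : ℚ) =
      (1 / (N.choose z : ℚ)) *
        ∑ J ∈ ((Finset.univ : Finset (Fin K)).powerset).filter
            (fun J => J.Nonempty),
          (-1 : ℚ) ^ (J.card + 1) *
            ((N - (J.biUnion R).card).choose (z - (J.biUnion R).card) : ℚ) :=
  prob_random_subset_contains_sdds_general U N hU K R hR z hz1
end
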